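/- arXiv:2602.13177 — 6 statements merged into one kernel-verified Lean document; each statement's English description precedes it below -/
import Mathlib

section
/- Let c ∈ {0,1}^d with at most S nonzero coordinates, and let a partition of [d] into n equal-size blocks be chosen uniformly at random. Then E[(max_j ‖c_{B_j}‖_2)^2] ≤ 6 max{S/n, ln n}. -/
/-!
Let `T` be the support of `c` and `k_j(B) = #(T ∩ B_j)`, so that `(max_j ‖c_{B_j}‖₂)² = max_j k_j`.
Bound the maximum by `log ∑_j exp k_j` and pull the expectation inside the logarithm (Jensen).
Since `exp k = (1 + (e - 1))^k = ∑_r C(k, r) (e - 1)^r`, it remains to bound `E C(k_j, r)`, the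
expected number of `r`-subsets of `T` lying in block `j`. By symmetry a fixed `r`-set lies in
block `j` (of size `m = d / n`) with probability `C(m, r) / C(nm, r) ≤ n^{-r}`, so `E C(k_j, r) ≤ (#T / n)^r / r!` and
`E exp k_j ≤ exp ((e - 1) #T / n)`. Hence `E max_j k_j ≤ log n + (e - 1) S / n ≤ 3 max {S/n, log n}`.
-/

open Finset Real

/-- The `L²` norm of the restriction of `x` to the `j`-th block. -/
noncomputable def blockL2 {d n : ℕ} (B : Fin d → Fin n) (x : Fin d → ℝ) (j : Fin n) : ℝ :=
  Real.sqrt (∑ i ∈ Finset.univ.filter (fun i => B i = j), (x i) ^ 2)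

open scoped BigOperators

theorem Finset.filter_subset_powersetCard {α : Type*} [DecidableEq α] (s t : Finset α) (r : ℕ) :
    {A ∈ powersetCard r s | A ⊆ t} = powersetCard r (s ∩ t) := by
  ext A
  simp only [mem_filter, mem_powersetCard, subset_inter_iff]
  tauto

theorem Finset.exists_perm_map_eq {α : Type*} [Fintype α] [DecidableEq α] {A A' : Finset α}
    (h : #A = #A') : ∃ σ : Equiv.Perm α, A.map σ.toEmbedding = A' := by
  let σ := (equivOfCardEq h).extendSubtype
  refine ⟨σ, eq_of_subset_of_card_le (fun i hi => ?_) (by rw [card_map, h])⟩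
  obtain ⟨a, ha, rfl⟩ := mem_map.mp hi
  exact (equivOfCardEq h).extendSubtype_mem a ha

theorem Nat.choose_mul_pow_le_choose_mul (m n r : ℕ) : m.choose r * n ^ r ≤ (n * m).choose r := by
  have hdesc : m.descFactorial r * n ^ r ≤ (n * m).descFactorial r := by
    induction r with
    | zero => simp
    | succ r ih =>
      rw [Nat.descFactorial_succ, Nat.descFactorial_succ, pow_succ]
      calc (m - r) * m.descFactorial r * (n ^ r * n)
          = ((m - r) * n) * (m.descFactorial r * n ^ r) := by ring
        _ ≤ (n * m - r) * (n * m).descFactorial r := by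
          refine Nat.mul_le_mul ?_ ih
          rcases n.eq_zero_or_pos with rfl | hn
          · simp
          · rw [Nat.sub_mul, mul_comm m n]
            exact Nat.sub_le_sub_left (Nat.le_mul_of_pos_right r hn) _
  rw [Nat.descFactorial_eq_factorial_mul_choose, Nat.descFactorial_eq_factorial_mul_choose,
    mul_assoc] at hdesc
  exact Nat.le_of_mul_le_mul_left hdesc r.factorial_pos

theorem add_one_pow_eq_sum_range_choose {R : Type*} [CommSemiring R] (x : R) {k t : ℕ}
    (hkt : k ≤ t) : (x + 1) ^ k = ∑ r ∈ range (t + 1), (k.choose r : R) * x ^ r := by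
  rw [add_pow, ← sum_subset (range_subset_range.mpr (Nat.succ_le_succ hkt))]
  · exact sum_congr rfl fun r _ => by rw [one_pow, mul_one, mul_comm]
  · intro r _ hr
    rw [Nat.choose_eq_zero_of_lt (by simpa using hr), Nat.cast_zero, zero_mul]

theorem Finset.sup'_le_log_sum_exp {ι : Type*} (s : Finset ι) (hs : s.Nonempty) (f : ι → ℝ) :
    s.sup' hs f ≤ log (∑ i ∈ s, exp (f i)) := by
  obtain ⟨j, hj, hsup⟩ := s.exists_mem_eq_sup' hs f
  rw [hsup, le_log_iff_exp_le (sum_pos (fun i _ => exp_pos _) hs)]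
  exact single_le_sum (f := fun i => exp (f i)) (fun i _ => (exp_pos _).le) hj

theorem Finset.sq_sup'_sqrt {ι : Type*} {s : Finset ι} (hs : s.Nonempty) {f : ι → ℝ}
    (hf : ∀ i ∈ s, 0 ≤ f i) : (s.sup' hs fun i => √(f i)) ^ 2 = s.sup' hs f := by
  rw [← Function.comp_def, ← apply_sup'_eq_sup'_comp hs _ fun _ _ => sqrt_monotone.map_max,
    sq_sqrt]
  obtain ⟨i, hi⟩ := hs
  exact (hf i hi).trans (le_sup' f hi)

theorem Finset.expect_log_le_log_expect {β : Type*} {s : Finset β} (hs : s.Nonempty) {f : β → ℝ}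
    (hf : ∀ x ∈ s, 0 < f x) : 𝔼 x ∈ s, log (f x) ≤ log (𝔼 x ∈ s, f x) := by
  have hw : ∑ _x ∈ s, (#s : ℝ)⁻¹ = 1 := by
    rw [sum_const, nsmul_eq_mul, mul_inv_cancel₀ (by exact_mod_cast hs.card_ne_zero)]
  have := strictConcaveOn_log_Ioi.concaveOn.le_map_sum (fun _ _ => by positivity) hw hf
  simpa only [expect_eq_sum_div_card, sum_div, smul_eq_mul, inv_mul_eq_div] using this

section EqualPartitions

variable {α ι : Type*} [Fintype α] [DecidableEq α] [DecidableEq ι]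

def block (B : α → ι) (j : ι) : Finset α := {i | B i = j}

variable (α ι) in
def equalPartitions [Fintype ι] (m : ℕ) : Finset (α → ι) :=
  {B | ∀ j, #(block B j) = m}

variable [Fintype ι] {m : ℕ}

theorem comp_perm_mem_equalPartitions_iff (B : α → ι) (σ : Equiv.Perm α) :
    B ∘ σ ∈ equalPartitions α ι m ↔ B ∈ equalPartitions α ι m := by
  have hblock : ∀ j, #(block (B ∘ σ) j) = #(block B j) := fun j => card_equiv σ (by simp [block])
  simp only [equalPartitions, mem_filter, mem_univ, true_and, hblock]

theorem card_eq_mul_of_mem_equalPartitions {B : α → ι} (hB : B ∈ equalPartitions α ι m) :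
    Fintype.card α = Fintype.card ι * m := by
  rw [← card_univ, card_eq_sum_card_fiberwise (f := B) (t := univ) (fun _ _ => mem_univ _),
    ← card_univ (α := ι), card_eq_sum_ones, sum_mul, one_mul]
  exact sum_congr rfl fun j _ => (mem_filter.mp hB).2 j

theorem card_filter_subset_block_eq_of_card_eq (j : ι) {A A' : Finset α} (h : #A = #A') :
    #{B ∈ equalPartitions α ι m | A ⊆ block B j} =
      #{B ∈ equalPartitions α ι m | A' ⊆ block B j} := by
  obtain ⟨σ, rfl⟩ := exists_perm_map_eq h
  refine (card_equiv (Equiv.arrowCongr σ.symm (Equiv.refl ι)) fun B => ?_).symm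
  have hcomp : Equiv.arrowCongr σ.symm (Equiv.refl ι) B = B ∘ σ := rfl
  simp only [mem_filter, hcomp, comp_perm_mem_equalPartitions_iff, subset_iff, forall_mem_map,
    block, mem_univ, true_and, Function.comp_apply, Equiv.coe_toEmbedding]

theorem card_filter_subset_block_mul_choose (j : ι) (A : Finset α) :
    #{B ∈ equalPartitions α ι m | A ⊆ block B j} * (Fintype.card α).choose #A =
      #(equalPartitions α ι m) * m.choose #A := by
  have hblock : ∀ B ∈ equalPartitions α ι m,
      #{A' ∈ powersetCard #A univ | A' ⊆ block B j} = m.choose #A := fun B hB => by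
    rw [filter_subset_powersetCard, univ_inter, card_powersetCard, (mem_filter.mp hB).2 j]
  have hdouble := sum_card_bipartiteAbove_eq_sum_card_bipartiteBelow
    (s := powersetCard #A (univ : Finset α)) (t := equalPartitions α ι m)
    (r := fun A' B => A' ⊆ block B j)
  simp only [bipartiteAbove, bipartiteBelow] at hdouble
  rw [sum_congr rfl fun A' hA' => card_filter_subset_block_eq_of_card_eq j
      (mem_powersetCard.mp hA').2, sum_congr rfl hblock, sum_const, sum_const,
    card_powersetCard, card_univ, smul_eq_mul, smul_eq_mul] at hdouble
  rw [mul_comm, hdouble]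

theorem sum_choose_card_inter_block_mul_choose (T : Finset α) (j : ι) (r : ℕ) :
    (∑ B ∈ equalPartitions α ι m, (#(T ∩ block B j)).choose r) * (Fintype.card α).choose r =
      #(equalPartitions α ι m) * m.choose r * (#T).choose r := by
  have hdouble := sum_card_bipartiteAbove_eq_sum_card_bipartiteBelow
    (s := equalPartitions α ι m) (t := powersetCard r T)
    (r := fun B A => A ⊆ block B j)
  simp only [bipartiteAbove, bipartiteBelow, filter_subset_powersetCard, card_powersetCard]
    at hdouble
  rw [hdouble, sum_mul, sum_congr rfl fun A hA =>
      (mem_powersetCard.mp hA).2 ▸ card_filter_subset_block_mul_choose j A,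
    sum_const, card_powersetCard, smul_eq_mul, mul_comm]

theorem expect_choose_card_inter_block_le [Nonempty ι] (T : Finset α) (j : ι) {r : ℕ}
    (hr : r ≤ #T) :
    𝔼 B ∈ equalPartitions α ι m, ((#(T ∩ block B j)).choose r : ℝ) ≤
      ((#T : ℝ) / Fintype.card ι) ^ r / r.factorial := by
  rcases (equalPartitions α ι m).eq_empty_or_nonempty with hP | ⟨B₀, hB₀⟩
  · rw [hP, expect_empty]
    positivity
  have hN := card_eq_mul_of_mem_equalPartitions hB₀
  have hP : (0 : ℝ) < #(equalPartitions α ι m) := by exact_mod_cast card_pos.mpr ⟨B₀, hB₀⟩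
  have hN_choose : (0 : ℝ) < (Fintype.card α).choose r := by
    exact_mod_cast Nat.choose_pos (hr.trans (card_le_univ T))
  have hn : (0 : ℝ) < Fintype.card ι := by exact_mod_cast Fintype.card_pos
  have hsum : ∑ B ∈ equalPartitions α ι m, ((#(T ∩ block B j)).choose r : ℝ) =
      #(equalPartitions α ι m) * m.choose r * (#T).choose r / (Fintype.card α).choose r := by
    rw [eq_div_iff hN_choose.ne']
    exact_mod_cast sum_choose_card_inter_block_mul_choose T j r
  have hm_choose : (m.choose r : ℝ) / (Fintype.card α).choose r ≤ 1 / Fintype.card ι ^ r := by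
    rw [div_le_div_iff₀ hN_choose (by positivity), one_mul, hN]
    exact_mod_cast Nat.choose_mul_pow_le_choose_mul m _ r
  rw [expect_eq_sum_div_card, div_le_iff₀ hP, hsum, div_pow]
  calc (#(equalPartitions α ι m) : ℝ) * m.choose r * (#T).choose r / (Fintype.card α).choose r
      = #(equalPartitions α ι m) * ((m.choose r : ℝ) / (Fintype.card α).choose r) *
          (#T).choose r := by ring
    _ ≤ #(equalPartitions α ι m) * (1 / Fintype.card ι ^ r) * ((#T : ℝ) ^ r / r.factorial) := by
      gcongr
      exact Nat.choose_le_pow_div r _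
    _ = (#T : ℝ) ^ r / Fintype.card ι ^ r / r.factorial * #(equalPartitions α ι m) := by ring

theorem expect_exp_card_inter_block_le [Nonempty ι] (T : Finset α) (j : ι) :
    𝔼 B ∈ equalPartitions α ι m, exp (#(T ∩ block B j) : ℝ) ≤
      exp ((exp 1 - 1) * (#T / Fintype.card ι)) := by
  have hexp : ∀ B : α → ι, exp (#(T ∩ block B j) : ℝ) =
      ∑ r ∈ range (#T + 1), ((#(T ∩ block B j)).choose r : ℝ) * (exp 1 - 1) ^ r := fun B => by
    rw [← add_one_pow_eq_sum_range_choose _ (card_le_card inter_subset_left), sub_add_cancel,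
      ← exp_nat_mul, mul_one]
  have he : 0 ≤ exp 1 - 1 := by linarith [add_one_le_exp (1 : ℝ)]
  calc 𝔼 B ∈ equalPartitions α ι m, exp (#(T ∩ block B j) : ℝ)
      = ∑ r ∈ range (#T + 1),
          (𝔼 B ∈ equalPartitions α ι m, ((#(T ∩ block B j)).choose r : ℝ)) * (exp 1 - 1) ^ r := by
        simp only [hexp, expect_sum_comm, expect_mul]
    _ ≤ ∑ r ∈ range (#T + 1),
          ((#T : ℝ) / Fintype.card ι) ^ r / r.factorial * (exp 1 - 1) ^ r := by
        gcongr with r hr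
        exact expect_choose_card_inter_block_le T j (Nat.lt_succ_iff.mp (mem_range.mp hr))
    _ = ∑ r ∈ range (#T + 1), ((exp 1 - 1) * (#T / Fintype.card ι)) ^ r / r.factorial := by
        refine sum_congr rfl fun r _ => by rw [mul_pow]; ring
    _ ≤ exp ((exp 1 - 1) * (#T / Fintype.card ι)) := sum_le_exp_of_nonneg (by positivity) _

theorem expect_sup'_card_inter_block_le [Nonempty ι] (T : Finset α) :
    𝔼 B ∈ equalPartitions α ι m, univ.sup' univ_nonempty (fun j => (#(T ∩ block B j) : ℝ)) ≤
      log (Fintype.card ι) + (exp 1 - 1) * (#T / Fintype.card ι) := by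
  have he : 0 ≤ exp 1 - 1 := by linarith [add_one_le_exp (1 : ℝ)]
  rcases (equalPartitions α ι m).eq_empty_or_nonempty with hP | hP
  · rw [hP, expect_empty]
    have := log_natCast_nonneg (Fintype.card ι)
    positivity
  have hpos : ∀ B : α → ι, 0 < ∑ j, exp (#(T ∩ block B j) : ℝ) := fun B =>
    sum_pos (fun j _ => exp_pos _) univ_nonempty
  calc 𝔼 B ∈ equalPartitions α ι m, univ.sup' univ_nonempty (fun j => (#(T ∩ block B j) : ℝ))
      ≤ 𝔼 B ∈ equalPartitions α ι m, log (∑ j, exp (#(T ∩ block B j) : ℝ)) :=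
        expect_le_expect fun B _ => sup'_le_log_sum_exp _ _ _
    _ ≤ log (𝔼 B ∈ equalPartitions α ι m, ∑ j, exp (#(T ∩ block B j) : ℝ)) :=
        expect_log_le_log_expect hP fun B _ => hpos B
    _ ≤ log (∑ _j : ι, exp ((exp 1 - 1) * (#T / Fintype.card ι))) := by
        refine log_le_log (expect_pos (fun B _ => hpos B) hP) ?_
        rw [expect_sum_comm]
        exact sum_le_sum fun j _ => expect_exp_card_inter_block_le T j
    _ = log (Fintype.card ι) + (exp 1 - 1) * (#T / Fintype.card ι) := by
        rw [sum_const, card_univ, nsmul_eq_mul, log_mul (by positivity) (exp_pos _).ne', log_exp]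

end EqualPartitions

theorem blockL2_eq_sqrt_card_support_inter_block {d n : ℕ} {c : Fin d → ℝ}
    (hc : ∀ i, c i = 0 ∨ c i = 1) (B : Fin d → Fin n) (j : Fin n) :
    blockL2 B c j = √(#(({i | c i ≠ 0} : Finset (Fin d)) ∩ block B j) : ℝ) := by
  have hsq : ∀ i, c i ^ 2 = if c i ≠ 0 then 1 else 0 := fun i => by
    rcases hc i with h | h <;> simp [h]
  rw [blockL2, sum_congr rfl fun i _ => hsq i, sum_boole, ← filter_mem_eq_inter]
  congr 3
  ext i
  simp [block, and_comm]

theorem expected_sq_dual_blockNorm_of_sparse_general {d n S : ℕ} (hn : 0 < n)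
    (c : Fin d → ℝ) (hc : ∀ i, c i = 0 ∨ c i = 1)
    (hsparse : (Finset.univ.filter (fun i => c i ≠ 0)).card ≤ S) :
    -- `P` is the set of equal-size partitions of `[d]` into `n` blocks
    let P : Finset (Fin d → Fin n) :=
      Finset.univ.filter
        (fun B => ∀ j : Fin n, (Finset.univ.filter (fun i => B i = j)).card = d / n)
    (∑ B ∈ P,
        (Finset.univ.sup' (Finset.univ_nonempty_iff.mpr ⟨⟨0, hn⟩⟩)
          (fun j => blockL2 B c j)) ^ 2) / (P.card : ℝ)
      ≤ 6 * max ((S : ℝ) / n) (Real.log n) := by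
  intro P
  have : Nonempty (Fin n) := ⟨⟨0, hn⟩⟩
  set T : Finset (Fin d) := {i | c i ≠ 0}
  have hsq : ∀ B : Fin d → Fin n, (univ.sup' univ_nonempty fun j => blockL2 B c j) ^ 2 =
      univ.sup' univ_nonempty fun j => (#(T ∩ block B j) : ℝ) := fun B => by
    simp only [blockL2_eq_sqrt_card_support_inter_block hc]
    exact sq_sup'_sqrt _ fun _ _ => Nat.cast_nonneg _
  have hP : P = equalPartitions (Fin d) (Fin n) (d / n) := by
    simp only [P, equalPartitions, block]
    -- the two filters differ only in their `Decidable` instances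
    congr
  have hTS : (#T : ℝ) / n ≤ S / n := by gcongr
  calc (∑ B ∈ P, (univ.sup' univ_nonempty fun j => blockL2 B c j) ^ 2) / (#P : ℝ)
      = 𝔼 B ∈ equalPartitions (Fin d) (Fin n) (d / n),
          univ.sup' univ_nonempty fun j => (#(T ∩ block B j) : ℝ) := by
        rw [expect_eq_sum_div_card, sum_congr rfl fun B _ => hsq B, hP]
    _ ≤ log n + (exp 1 - 1) * (#T / n) := by
        simpa using expect_sup'_card_inter_block_le (ι := Fin n) (m := d / n) T
    _ ≤ 6 * max ((S : ℝ) / n) (log n) := by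
        have hlog := le_max_right ((S : ℝ) / n) (log n)
        have hM := (log_natCast_nonneg n).trans hlog
        have hexp_one : exp 1 - 1 ≤ 2 := by linarith [exp_one_lt_d9]
        have : (exp 1 - 1) * (#T / n) ≤ 2 * max ((S : ℝ) / n) (log n) :=
          mul_le_mul hexp_one (hTS.trans (le_max_left _ _)) (by positivity) zero_le_two
        linarith

/-- For a `0-1` vector `c` with at most `S` nonzero coordinates and a uniformly random
partition of `[d]` into `n` equal-size blocks, the expected square of the dual block norm
satisfies `E[(max_j ‖c_{B_j}‖₂)²] ≤ 6 max{S/n, ln n}`. -/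
theorem expected_sq_dual_blockNorm_of_sparse {d n S : ℕ} (hd : 0 < d) (hn : 0 < n)
    (hS : 0 < S) (hSd : S ≤ d) (hdvd : n ∣ d)
    (c : Fin d → ℝ) (hc : ∀ i, c i = 0 ∨ c i = 1)
    (hsparse : (Finset.univ.filter (fun i => c i ≠ 0)).card ≤ S) :
    -- `P` is the set of equal-size partitions of `[d]` into `n` blocks
    let P : Finset (Fin d → Fin n) :=
      Finset.univ.filter
        (fun B => ∀ j : Fin n, (Finset.univ.filter (fun i => B i = j)).card = d / n)
    (∑ B ∈ P,
        (Finset.univ.sup' (Finset.univ_nonempty_iff.mpr ⟨⟨0, hn⟩⟩)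
          (fun j => blockL2 B c j)) ^ 2) / (P.card : ℝ)
      ≤ 6 * max ((S : ℝ) / n) (Real.log n) :=
  expected_sq_dual_blockNorm_of_sparse_general hn c hc hsparse
end

section
/- Let X_1,...,X_N be negatively associated mean-zero random variables with |X_i| ≤ 1 almost surely, and z_1,...,z_N ≥ 0 constants. Then for all δ > 0, P(Σ_i z_i X_i ≥ δ) ≤ exp(−3δ² / (2δ max_i z_i + 6 Σ_i z_i² E[X_i²])). -/
open Finset Real MeasureTheory ProbabilityTheory
open scoped Nat

/-!
Chernoff's method. For nondecreasing nonnegative `fᵢ`, negative association applied to `{a}` and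
`s` gives `E ∏_{i ∈ s} fᵢ(Xᵢ) ≤ ∏_{i ∈ s} E fᵢ(Xᵢ)` by induction on `s`, so at `t ≥ 0` the moment
generating function of `∑ zᵢ Xᵢ` is at most the product of those of the `zᵢ Xᵢ`, as under
independence. Comparing exponential series termwise gives `e^{ty} ≤ 1 + ty + y² (e^t - 1 - t)`
for `|y| ≤ 1`, and `(n + 2)! ≥ 2 · 3ⁿ` gives `e^t - 1 - t ≤ t² / (2 (1 - t/3))`, so each factor
is at most `exp (t² zᵢ² E[Xᵢ²] / (2 (1 - tM/3)))` with `M = maxᵢ zᵢ`. With `V = ∑ zᵢ² E[Xᵢ²]`,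
the choice `t = 3δ / (3V + Mδ)` gives the bound; when `V = 0` the sum vanishes almost surely.
-/

lemma summable_pow_add_two_div_factorial (t : ℝ) :
    Summable fun n : ℕ => t ^ (n + 2) / ((n + 2)! : ℝ) :=
  (summable_nat_add_iff 2).2 (summable_pow_div_factorial t)

lemma exp_sub_one_sub_eq_tsum (t : ℝ) :
    exp t - 1 - t = ∑' n : ℕ, t ^ (n + 2) / ((n + 2)! : ℝ) := by
  rw [exp_eq_exp_ℝ, NormedSpace.exp_eq_tsum_div]
  beta_reduce
  rw [← (summable_pow_div_factorial t).sum_add_tsum_nat_add 2]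
  norm_num [sum_range_succ, sub_sub, add_sub_cancel_left]

lemma exp_mul_le_of_abs_le_one {t y : ℝ} (ht : 0 ≤ t) (hy : |y| ≤ 1) :
    exp (t * y) ≤ 1 + t * y + y ^ 2 * (exp t - 1 - t) := by
  have hterm (n : ℕ) :
      (t * y) ^ (n + 2) / ((n + 2)! : ℝ) ≤ y ^ 2 * (t ^ (n + 2) / ((n + 2)! : ℝ)) := by
    rw [mul_div_assoc', mul_pow, mul_comm (y ^ 2)]
    gcongr _ * ?_ / _
    calc y ^ (n + 2) ≤ |y| ^ (n + 2) := abs_pow y (n + 2) ▸ le_abs_self _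
      _ ≤ |y| ^ 2 := pow_le_pow_of_le_one (abs_nonneg y) hy (by omega)
      _ = y ^ 2 := sq_abs y
  have := (summable_pow_add_two_div_factorial (t * y)).tsum_le_tsum hterm
    ((summable_pow_add_two_div_factorial t).mul_left _)
  rw [tsum_mul_left, ← exp_sub_one_sub_eq_tsum, ← exp_sub_one_sub_eq_tsum] at this
  linarith

lemma exp_sub_one_sub_le_of_le {t b : ℝ} (ht : 0 ≤ t) (htb : t ≤ b) (hb : b < 3) :
    exp t - 1 - t ≤ t ^ 2 / (2 * (1 - b / 3)) := by
  have hb₀ : 0 ≤ b / 3 := by linarith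
  have hb₁ : b / 3 < 1 := by linarith
  have hgeom : t ^ 2 / (2 * (1 - b / 3)) = ∑' n : ℕ, t ^ 2 / 2 * (b / 3) ^ n := by
    rw [tsum_mul_left, tsum_geometric_of_lt_one hb₀ hb₁]
    field_simp
  rw [exp_sub_one_sub_eq_tsum, hgeom]
  refine (summable_pow_add_two_div_factorial t).tsum_le_tsum (fun n => ?_)
    ((summable_geometric_of_lt_one hb₀ hb₁).mul_left _)
  have hfact : (2 * 3 ^ n : ℝ) ≤ (n + 2)! := by
    exact_mod_cast add_comm n 2 ▸ Nat.factorial_mul_pow_le_factorial (m := 2) (n := n)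
  calc t ^ (n + 2) / ((n + 2)! : ℝ) ≤ t ^ (n + 2) / (2 * 3 ^ n) := by gcongr
    _ = t ^ 2 * t ^ n / (2 * 3 ^ n) := by ring
    _ ≤ t ^ 2 * b ^ n / (2 * 3 ^ n) := by gcongr
    _ = t ^ 2 / 2 * (b / 3) ^ n := by rw [div_pow]; ring

section Probability

variable {Ω : Type*} [MeasurableSpace Ω] {μ : Measure Ω}

lemma integrable_sq_of_abs_le_one [IsFiniteMeasure μ] {Y : Ω → ℝ} (hY : AEMeasurable Y μ)
    (hbdd : ∀ᵐ ω ∂μ, |Y ω| ≤ 1) : Integrable (fun ω => Y ω ^ 2) μ :=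
  .of_bound (hY.pow_const 2).aestronglyMeasurable 1 <| hbdd.mono fun ω h => by
    simpa only [norm_pow, norm_eq_abs] using pow_le_one₀ (abs_nonneg _) h

lemma mgf_le_exp_integral_sq_mul [IsProbabilityMeasure μ] {Y : Ω → ℝ} (hY : AEMeasurable Y μ)
    (hmean : ∫ ω, Y ω ∂μ = 0) (hbdd : ∀ᵐ ω ∂μ, |Y ω| ≤ 1) {t : ℝ} (ht : 0 ≤ t) :
    mgf Y μ t ≤ exp ((∫ ω, Y ω ^ 2 ∂μ) * (exp t - 1 - t)) := by
  have hY₁ : Integrable Y μ := .of_bound hY.aestronglyMeasurable 1 (by simpa using hbdd)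
  have hY₂ := integrable_sq_of_abs_le_one hY hbdd
  have hlin : Integrable (fun ω => 1 + t * Y ω) μ := (integrable_const 1).add (hY₁.const_mul t)
  calc mgf Y μ t ≤ ∫ ω, (1 + t * Y ω + Y ω ^ 2 * (exp t - 1 - t)) ∂μ :=
        integral_mono_of_nonneg (ae_of_all _ fun ω => (exp_pos _).le)
          (hlin.add (hY₂.mul_const _)) (hbdd.mono fun ω h => exp_mul_le_of_abs_le_one ht h)
    _ = 1 + (∫ ω, Y ω ^ 2 ∂μ) * (exp t - 1 - t) := by
        rw [integral_add hlin (hY₂.mul_const _), integral_add (integrable_const 1)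
          (hY₁.const_mul t), integral_const_mul, integral_mul_const, hmean]
        simp
    _ ≤ exp ((∫ ω, Y ω ^ 2 ∂μ) * (exp t - 1 - t)) := by
        linarith [add_one_le_exp ((∫ ω, Y ω ^ 2 ∂μ) * (exp t - 1 - t))]

lemma mgf_le_exp_sq_mul_integral_sq_div [IsProbabilityMeasure μ] {Y : Ω → ℝ}
    (hY : AEMeasurable Y μ) (hmean : ∫ ω, Y ω ∂μ = 0) (hbdd : ∀ᵐ ω ∂μ, |Y ω| ≤ 1) {t b : ℝ}
    (ht : 0 ≤ t) (htb : t ≤ b) (hb : b < 3) :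
    mgf Y μ t ≤ exp (t ^ 2 * (∫ ω, Y ω ^ 2 ∂μ) / (2 * (1 - b / 3))) := by
  refine (mgf_le_exp_integral_sq_mul hY hmean hbdd ht).trans (exp_le_exp.2 ?_)
  rw [mul_comm (t ^ 2), mul_div_assoc]
  exact mul_le_mul_of_nonneg_left (exp_sub_one_sub_le_of_le ht htb hb)
    (integral_nonneg fun ω => sq_nonneg _)

lemma ae_sum_mul_eq_zero_of_sum_sq_mul_integral_sq_eq_zero {ι : Type*} [Fintype ι]
    {X : ι → Ω → ℝ} (hX : ∀ i, Integrable (fun ω => X i ω ^ 2) μ) {c : ι → ℝ}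
    (h : ∑ i, c i ^ 2 * ∫ ω, X i ω ^ 2 ∂μ = 0) : ∀ᵐ ω ∂μ, ∑ i, c i * X i ω = 0 := by
  have hterm (i : ι) : ∀ᵐ ω ∂μ, c i * X i ω = 0 := by
    have hint : Integrable (fun ω => (c i * X i ω) ^ 2) μ := by
      simpa only [mul_pow] using (hX i).const_mul (c i ^ 2)
    have hzero : ∫ ω, (c i * X i ω) ^ 2 ∂μ = 0 := by
      simp_rw [mul_pow, integral_const_mul]
      exact (sum_eq_zero_iff_of_nonneg fun j _ => mul_nonneg (sq_nonneg _)
        (integral_nonneg fun ω => sq_nonneg _)).1 h i (mem_univ i)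
    filter_upwards [(integral_eq_zero_iff_of_nonneg (fun ω => sq_nonneg _) hint).1 hzero]
      with ω hω using pow_eq_zero_iff two_ne_zero |>.1 hω
  filter_upwards [ae_all_iff.2 hterm] with ω hω using sum_eq_zero fun i _ => hω i

end Probability

def NegativelyAssociated {ι Ω : Type*} [MeasurableSpace Ω] (X : ι → Ω → ℝ) (μ : Measure Ω) :
    Prop :=
  ∀ (I J : Finset ι), Disjoint I J →
    ∀ f g : (ι → ℝ) → ℝ, Monotone f → Monotone g → Measurable f → Measurable g →
      (∀ x y : ι → ℝ, (∀ i ∈ I, x i = y i) → f x = f y) →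
      (∀ x y : ι → ℝ, (∀ j ∈ J, x j = y j) → g x = g y) →
      ∫ ω, f (fun i => X i ω) * g (fun i => X i ω) ∂μ
        ≤ (∫ ω, f (fun i => X i ω) ∂μ) * ∫ ω, g (fun i => X i ω) ∂μ

namespace NegativelyAssociated

variable {ι Ω : Type*} [MeasurableSpace Ω] {μ : Measure Ω} [IsProbabilityMeasure μ]
  {X : ι → Ω → ℝ}

theorem integral_prod_le_prod_integral (hX : NegativelyAssociated X μ) {f : ι → ℝ → ℝ}
    (hmono : ∀ i, Monotone (f i)) (hmeas : ∀ i, Measurable (f i))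
    (hnonneg : ∀ i x, 0 ≤ f i x) (s : Finset ι) :
    ∫ ω, ∏ i ∈ s, f i (X i ω) ∂μ ≤ ∏ i ∈ s, ∫ ω, f i (X i ω) ∂μ := by
  classical
  induction s using Finset.induction_on with
  | empty => simp
  | insert a s ha ih =>
    have hf : Monotone fun x : ι → ℝ => f a (x a) := fun x y hxy => hmono a (hxy a)
    have hg : Monotone fun x : ι → ℝ => ∏ i ∈ s, f i (x i) := fun x y hxy =>
      prod_le_prod (fun i _ => hnonneg i _) fun i _ => hmono i (hxy i)
    have hsplit := hX {a} s (disjoint_singleton_left.2 ha) _ _ hf hg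
      ((hmeas a).comp (measurable_pi_apply a))
      (Finset.measurable_prod s fun i _ => (hmeas i).comp (measurable_pi_apply i))
      (fun x y h => by rw [h a (mem_singleton_self a)])
      (fun x y h => prod_congr rfl fun i hi => by rw [h i hi])
    simp only [prod_insert ha]
    exact hsplit.trans (mul_le_mul_of_nonneg_left ih (integral_nonneg fun ω => hnonneg a _))

theorem mgf_sum_mul_le [Fintype ι] (hX : NegativelyAssociated X μ) {c : ι → ℝ}
    (hc : ∀ i, 0 ≤ c i) {t : ℝ} (ht : 0 ≤ t) :
    mgf (fun ω => ∑ i, c i * X i ω) μ t ≤ ∏ i, mgf (X i) μ (t * c i) := by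
  have := hX.integral_prod_le_prod_integral (f := fun i x => exp (t * c i * x))
    (fun i x y hxy => exp_le_exp.2 (mul_le_mul_of_nonneg_left hxy (mul_nonneg ht (hc i))))
    (fun i => (measurable_const_mul _).exp) (fun i x => (exp_pos _).le) univ
  simpa only [mgf, mul_sum, exp_sum, mul_assoc] using this

theorem measureReal_ge_le_exp [Fintype ι] (hX : NegativelyAssociated X μ)
    (hmeas : ∀ i, AEMeasurable (X i) μ) (hmean : ∀ i, ∫ ω, X i ω ∂μ = 0)
    (hbdd : ∀ i, ∀ᵐ ω ∂μ, |X i ω| ≤ 1) {c : ι → ℝ} (hc : ∀ i, 0 ≤ c i) {M : ℝ}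
    (hcM : ∀ i, c i ≤ M) {t : ℝ} (ht : 0 ≤ t) (htM : t * M < 3) (δ : ℝ) :
    μ.real {ω | δ ≤ ∑ i, c i * X i ω}
      ≤ exp (-t * δ + t ^ 2 * (∑ i, c i ^ 2 * ∫ ω, X i ω ^ 2 ∂μ) / (2 * (1 - t * M / 3))) := by
  have hint : Integrable (fun ω => exp (t * ∑ i, c i * X i ω)) μ := by
    refine .of_bound ((Finset.aemeasurable_fun_sum _ fun i _ =>
      (hmeas i).const_mul (c i)).const_mul t).exp.aestronglyMeasurable (exp (t * ∑ i, c i)) ?_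
    filter_upwards [ae_all_iff.2 hbdd] with ω hω
    rw [norm_of_nonneg (exp_pos _).le, exp_le_exp]
    exact mul_le_mul_of_nonneg_left (sum_le_sum fun i _ =>
      mul_le_of_le_one_right (hc i) ((le_abs_self _).trans (hω i))) ht
  have hfactor (i : ι) : mgf (X i) μ (t * c i)
      ≤ exp (t ^ 2 * (c i ^ 2 * ∫ ω, X i ω ^ 2 ∂μ) / (2 * (1 - t * M / 3))) := by
    have := mgf_le_exp_sq_mul_integral_sq_div (hmeas i) (hmean i) (hbdd i)
      (mul_nonneg ht (hc i)) (mul_le_mul_of_nonneg_left (hcM i) ht) htM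
    rwa [mul_pow, mul_assoc] at this
  calc μ.real {ω | δ ≤ ∑ i, c i * X i ω}
      ≤ exp (-t * δ) * mgf (fun ω => ∑ i, c i * X i ω) μ t :=
        measure_ge_le_exp_mul_mgf δ ht hint
    _ ≤ exp (-t * δ) * ∏ i, exp (t ^ 2 * (c i ^ 2 * ∫ ω, X i ω ^ 2 ∂μ) / (2 * (1 - t * M / 3))) :=
        mul_le_mul_of_nonneg_left ((hX.mgf_sum_mul_le hc ht).trans
          (prod_le_prod (fun i _ => mgf_nonneg) fun i _ => hfactor i)) (exp_pos _).le
    _ = _ := by rw [← exp_sum, ← exp_add, mul_sum, sum_div]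

end NegativelyAssociated

/-- Bernstein's inequality for negatively associated random variables:
if `X_1, …, X_N` are negatively associated mean-zero random variables with `|X_i| ≤ 1`
a.s., and `z_i ≥ 0` are constants, then for all `δ > 0`,
`P(Σ_i z_i X_i ≥ δ) ≤ exp(−3δ² / (2δ max_i z_i + 6 Σ_i z_i² E[X_i²]))`. -/
theorem bernstein_negatively_associated {Ω : Type*} [MeasurableSpace Ω]
    (μ : Measure Ω) [IsProbabilityMeasure μ]
    {N : ℕ} (hN : 0 < N) (X : Fin N → Ω → ℝ)
    (hmeas : ∀ i, Measurable (X i))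
    (hmean : ∀ i, ∫ ω, X i ω ∂μ = 0)
    (hbdd : ∀ i, ∀ᵐ ω ∂μ, |X i ω| ≤ 1)
    -- negative association: for all disjoint index sets `I, J` and all coordinatewise
    -- nondecreasing functions `f` (depending only on `I`) and `g` (depending only on `J`),
    -- `E[f(X) g(X)] ≤ E[f(X)] E[g(X)]`, i.e. `Cov(f(X), g(X)) ≤ 0`.
    (hNA : ∀ (I J : Finset (Fin N)), Disjoint I J →
      ∀ f g : (Fin N → ℝ) → ℝ, Monotone f → Monotone g →
        Measurable f → Measurable g →
        (∀ x y : Fin N → ℝ, (∀ i ∈ I, x i = y i) → f x = f y) →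
        (∀ x y : Fin N → ℝ, (∀ j ∈ J, x j = y j) → g x = g y) →
        ∫ ω, f (fun i => X i ω) * g (fun i => X i ω) ∂μ
          ≤ (∫ ω, f (fun i => X i ω) ∂μ) * ∫ ω, g (fun i => X i ω) ∂μ)
    (z : Fin N → ℝ) (hz : ∀ i, 0 ≤ z i) {δ : ℝ} (hδ : 0 < δ) :
    (μ {ω | δ ≤ ∑ i, z i * X i ω}).toReal
      ≤ Real.exp (-(3 * δ ^ 2) /
          (2 * δ * (Finset.univ.sup' (Finset.univ_nonempty_iff.mpr ⟨⟨0, hN⟩⟩) z)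
            + 6 * ∑ i, (z i) ^ 2 * ∫ ω, (X i ω) ^ 2 ∂μ)) := by
  set M := univ.sup' (univ_nonempty_iff.mpr ⟨⟨0, hN⟩⟩) z
  set V := ∑ i, z i ^ 2 * ∫ ω, X i ω ^ 2 ∂μ
  have hzM (i : Fin N) : z i ≤ M := le_sup' z (mem_univ i)
  have hM : 0 ≤ M := (hz _).trans (hzM ⟨0, hN⟩)
  have hV : 0 ≤ V := sum_nonneg fun i _ => mul_nonneg (sq_nonneg _)
    (integral_nonneg fun ω => sq_nonneg _)
  rcases hV.eq_or_lt with hV₀ | hV₀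
  · have hsum := ae_sum_mul_eq_zero_of_sum_sq_mul_integral_sq_eq_zero
      (fun i => integrable_sq_of_abs_le_one (hmeas i).aemeasurable (hbdd i)) hV₀.symm
    have hnull : μ {ω | δ ≤ ∑ i, z i * X i ω} = 0 :=
      measure_eq_zero_iff_ae_notMem.2 <| hsum.mono fun ω hω => by simpa [hω] using hδ
    simpa [hnull] using (exp_pos _).le
  · have hK : 0 < 3 * V + M * δ := by positivity
    have htM : 3 * δ / (3 * V + M * δ) * M < 3 := by
      rw [div_mul_eq_mul_div, div_lt_iff₀ hK]
      nlinarith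
    rw [← measureReal_def]
    convert NegativelyAssociated.measureReal_ge_le_exp hNA (fun i => (hmeas i).aemeasurable)
      hmean hbdd hz hzM (by positivity) htM δ using 2
    rw [show ∑ i, z i ^ 2 * ∫ ω, X i ω ^ 2 ∂μ = V from rfl]
    field_simp
    ring
end

section
/- Over the simplex Δ_2 with losses f^{(t)}(x) = −x_2 for odd t and f^{(t)} = 0 for even t, started at (1/2,1/2), any algorithm alternating a Euclidean mirror-descent step (step size η_euc < 16/T, on odd steps) with an entropic step (on even steps, with zero gradient) incurs regret at least T/128. -/
open Finset Real

/-! The comparator `(0, 1)` earns `−1` on each of the `T/2` loss rounds, so the regret is at least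
`∑ⱼ (1 − x_{2j} 1)`. A Euclidean step raises `x₂` by at most `η/2` and an entropic step leaves it
alone, so `x_{2j} 1 ≤ 1/2 + jη/2`; since `η < 16/T`, over the first `T/16` loss rounds `x₂` stays
at most `3/4` on average, which already costs `T/64`. -/

theorem Finset.sum_range_two_mul_ite_even {M : Type*} [AddCommMonoid M] (f : ℕ → M) (n : ℕ) :
    ∑ t ∈ range (2 * n), (if t % 2 = 0 then f t else 0) = ∑ j ∈ range n, f (2 * j) := by
  induction n with
  | zero => simp
  | succ n ih =>
    rw [mul_add, mul_one, sum_range_succ, sum_range_succ, ih, sum_range_succ]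
    simp [Nat.add_mod]

theorem Finset.cast_sum_range_id_mul_two {R : Type*} [CommRing R] (k : ℕ) :
    (∑ j ∈ range k, (j : R)) * 2 = k * (k - 1) := by
  induction k with
  | zero => simp
  | succ k ih => rw [sum_range_succ, add_mul, ih]; push_cast; ring

theorem le_add_mul_of_le_add {y : ℕ → ℝ} {c : ℝ} (h : ∀ j, y (j + 1) ≤ y j + c) (j : ℕ) :
    y j ≤ y 0 + j * c := by
  induction j with
  | zero => simp
  | succ j ih => push_cast; linarith [h j]

theorem sum_le_sub_of_le_one_of_le_half_add {y : ℕ → ℝ} {c : ℝ} {k n : ℕ} (hkn : k ≤ n)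
    (hck : 2 * c * k ≤ 1) (hy1 : ∀ j, y j ≤ 1) (hy : ∀ j, y j ≤ 1 / 2 + j * c) :
    ∑ j ∈ range n, y j ≤ n - k / 4 := by
  have hinit : ∑ j ∈ range k, y j ≤ 3 * k / 4 :=
    calc ∑ j ∈ range k, y j ≤ ∑ j ∈ range k, (1 / 2 + j * c) := sum_le_sum fun j _ => hy j
      _ = k / 2 + c * k * (k - 1) / 2 := by
        rw [sum_add_distrib, ← sum_mul, sum_const, card_range, nsmul_eq_mul]
        linear_combination (c / 2) * cast_sum_range_id_mul_two (R := ℝ) k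
      _ ≤ 3 * k / 4 := by
        rcases k.eq_zero_or_pos with rfl | hk
        · simp
        · have : (1 : ℝ) ≤ k := by exact_mod_cast hk
          nlinarith
  have htail : ∑ j ∈ Ico k n, y j ≤ n - k :=
    calc ∑ j ∈ Ico k n, y j ≤ ∑ j ∈ Ico k n, (1 : ℝ) := sum_le_sum fun j _ => hy1 j
      _ = n - k := by simp [Nat.cast_sub hkn]
  rw [← sum_range_add_sum_Ico _ hkn]
  linarith

theorem sInf_stdSimplex_sum_range_two_mul_ite_even_le (n : ℕ) :
    sInf {v : ℝ | ∃ z ∈ stdSimplex ℝ (Fin 2),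
      v = ∑ t ∈ range (2 * n), (if t % 2 = 0 then -(z 1) else 0)} ≤ -n := by
  simp only [sum_range_two_mul_ite_even, sum_const, card_range, nsmul_eq_mul]
  refine csInf_le ⟨-n, ?_⟩ ⟨Pi.single 1 1, single_mem_stdSimplex ℝ 1, by simp⟩
  rintro v ⟨z, hz, rfl⟩
  rw [mul_neg]
  exact neg_le_neg (mul_le_of_le_one_right n.cast_nonneg (mem_Icc_of_mem_stdSimplex hz 1).2)

theorem alternating_small_step_linear_regret_general (T : ℕ) (h16 : 16 ∣ T)
    (η : ℝ) (hηT : η < 16 / (T : ℝ))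
    (x : ℕ → Fin 2 → ℝ) (hx0 : x 0 = fun _ => (1 : ℝ) / 2)
    (hxK : ∀ t, x t ∈ stdSimplex ℝ (Fin 2))
    -- odd rounds (`0`-indexed even `t`): Euclidean step with gradient `(0, −1)`
    (hodd : ∀ t, t % 2 = 0 →
      x (t + 1) 1 = min (x t 1 + η / 2) 1 ∧ x (t + 1) 0 = 1 - x (t + 1) 1)
    -- even rounds: zero loss, the entropic step leaves the iterate unchanged
    (heven : ∀ t, t % 2 = 1 → x (t + 1) = x t) :
    (∑ t ∈ Finset.range T, (if t % 2 = 0 then -(x t 1) else 0))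
        - sInf {v : ℝ | ∃ z ∈ stdSimplex ℝ (Fin 2),
            v = ∑ t ∈ Finset.range T, (if t % 2 = 0 then -(z 1) else 0)}
      ≥ (T : ℝ) / 128 := by
  obtain ⟨k, rfl⟩ := h16
  have hηk : 2 * (η / 2) * k ≤ 1 := by
    rcases k.eq_zero_or_pos with rfl | hk
    · simp
    · have := (lt_div_iff₀ (by positivity)).mp hηT
      push_cast at this
      linarith
  have hstep : ∀ j, x (2 * (j + 1)) 1 ≤ x (2 * j) 1 + η / 2 := fun j => by
    rw [show 2 * (j + 1) = 2 * j + 1 + 1 by ring, heven _ (by omega), (hodd _ (by omega)).1]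
    exact min_le_left _ _
  have hgrowth : ∀ j, x (2 * j) 1 ≤ 1 / 2 + j * (η / 2) := fun j => by
    simpa [hx0] using le_add_mul_of_le_add (y := fun j => x (2 * j) 1) hstep j
  have hsum := sum_le_sub_of_le_one_of_le_half_add (n := 8 * k) (by omega) hηk
    (fun j => (mem_Icc_of_mem_stdSimplex (hxK (2 * j)) 1).2) hgrowth
  rw [show 16 * k = 2 * (8 * k) by ring, sum_range_two_mul_ite_even (fun t => -(x t 1)),
    sum_neg_distrib]
  have hcomparator := sInf_stdSimplex_sum_range_two_mul_ite_even_le (8 * k)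
  push_cast at hsum hcomparator ⊢
  linarith

/-- Over `Δ₂` with losses `f^{(t)}(x) = −x₂` for odd `t` (our `0`-indexed even `t`) and
`f^{(t)} = 0` for even `t`, started at `(1/2, 1/2)`, any algorithm alternating a Euclidean
mirror-descent step (step size `η < 16/T`, moving `x₂` to `min(x₂ + η/2, 1)`) on odd rounds
with an entropic step (no movement, gradient zero) on even rounds incurs regret ≥ `T/128`. -/
theorem alternating_small_step_linear_regret (T : ℕ) (hT : 0 < T) (h16 : 16 ∣ T)
    (η : ℝ) (hη : 0 ≤ η) (hηT : η < 16 / (T : ℝ))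
    (x : ℕ → Fin 2 → ℝ) (hx0 : x 0 = fun _ => (1 : ℝ) / 2)
    (hxK : ∀ t, x t ∈ stdSimplex ℝ (Fin 2))
    -- odd rounds (`0`-indexed even `t`): Euclidean step with gradient `(0, −1)`
    (hodd : ∀ t, t % 2 = 0 →
      x (t + 1) 1 = min (x t 1 + η / 2) 1 ∧ x (t + 1) 0 = 1 - x (t + 1) 1)
    -- even rounds: zero loss, the entropic step leaves the iterate unchanged
    (heven : ∀ t, t % 2 = 1 → x (t + 1) = x t) :
    (∑ t ∈ Finset.range T, (if t % 2 = 0 then -(x t 1) else 0))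
        - sInf {v : ℝ | ∃ z ∈ stdSimplex ℝ (Fin 2),
            v = ∑ t ∈ Finset.range T, (if t % 2 = 0 then -(z 1) else 0)}
      ≥ (T : ℝ) / 128 :=
  alternating_small_step_linear_regret_general T h16 η hηT x hx0 hxK hodd heven
end

section
/- Over the simplex Δ_2 with losses f^{(t)}(x) = −x_1 for odd t, f^{(t)} = 0 for even t ≤ T/8, and f^{(t)}(x) = −2x_2 for even t > T/8, started at (1/2,1/2): if the algorithm uses Euclidean mirror descent steps with step size η_euc ≥ 16/T on odd steps and entropic steps on even steps, then its regret is at least T/4. -/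
open Finset Real

/-- The loss at (0-indexed) round `t`: `−x₁` on odd (1-indexed) rounds, `0` on even rounds
up to `T/8`, and `−2x₂` on even rounds after `T/8`. -/
noncomputable def altLoss (T t : ℕ) (z : Fin 2 → ℝ) : ℝ :=
  if t % 2 = 0 then -(z 0) else if t + 1 ≤ T / 8 then 0 else -2 * z 1

/-!
Write `T = 16m`. The Euclidean steps push `x₁` up by `η_euc/2 ≥ 1/(2m)` each while the
entropic steps of the first `2m` rounds do nothing, so the iterate reaches the vertex `(1, 0)`
by round `2m`. There it is trapped: the clipped Euclidean step cannot raise `x₁` above `1`,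
and the multiplicative entropic update cannot revive the coordinate `x₂ = 0`. Hence each pair
of rounds contributes at least `-1` to the algorithm's loss, so its total is at least `-8m`, while
the total loss of `z` is `-8m z₁ - 14m z₂`, minimised at `(0, 1)` with value `-14m`. The regret is
therefore at least `6m ≥ T/4`.
-/

theorem sum_range_two_mul {M : Type*} [AddCommMonoid M] (f : ℕ → M) (n : ℕ) :
    ∑ t ∈ range (2 * n), f t = ∑ k ∈ range n, (f (2 * k) + f (2 * k + 1)) := by
  induction n with
  | zero => simp
  | succ n ih => rw [Nat.mul_succ, sum_range_succ, sum_range_succ, sum_range_succ, ih, add_assoc]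

theorem clipped_progression {u : ℕ → ℝ} {c : ℝ} {n : ℕ} (hc : 0 ≤ c) (h0 : u 0 ≤ 1)
    (hu : ∀ k < n, u (k + 1) = min (u k + c) 1) : ∀ k ≤ n, u k = min (u 0 + k * c) 1 := by
  intro k hk
  induction k with
  | zero => simp [min_eq_left h0]
  | succ k ih =>
    rw [hu k hk, ih (by omega), ← min_add_add_right, min_assoc,
      min_eq_right (by linarith : (1 : ℝ) ≤ 1 + c)]
    push_cast
    ring_nf

theorem altLoss_add_altLoss (m k : ℕ) (z w : Fin 2 → ℝ) :
    altLoss (16 * m) (2 * k) z + altLoss (16 * m) (2 * k + 1) w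
      = -z 0 + if k < m then 0 else -2 * w 1 := by
  have : 16 * m / 8 = 2 * m := by omega
  simp only [altLoss, this]
  split_ifs <;> first | omega | ring

theorem sum_range_altLoss (m : ℕ) (z : Fin 2 → ℝ) :
    ∑ t ∈ range (16 * m), altLoss (16 * m) t z = -(8 * m) * z 0 - 14 * m * z 1 := by
  have hpairs := sum_range_two_mul (fun t ↦ altLoss (16 * m) t z) (m + 7 * m)
  have hearly : ∑ k ∈ range m, (if k < m then (0 : ℝ) else -2 * z 1) = 0 :=
    sum_eq_zero fun k hk ↦ if_pos (mem_range.1 hk)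
  rw [show 2 * (m + 7 * m) = 16 * m by ring] at hpairs
  simp only [hpairs, altLoss_add_altLoss, sum_add_distrib, sum_range_add, hearly]
  simp only [sum_neg_distrib, sum_const, card_range, nsmul_eq_mul, Nat.cast_mul,
    Nat.cast_ofNat, add_lt_iff_neg_left, not_lt_zero, ↓reduceIte, neg_mul, zero_add]
  ring

theorem isLeast_sum_range_altLoss (m : ℕ) :
    IsLeast {v : ℝ | ∃ z ∈ stdSimplex ℝ (Fin 2),
        v = ∑ t ∈ range (16 * m), altLoss (16 * m) t z}
      (-(14 * m)) := by
  refine ⟨⟨Pi.single 1 1, single_mem_stdSimplex ℝ 1, by simp [sum_range_altLoss]⟩, ?_⟩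
  rintro _ ⟨z, hz, rfl⟩
  have hsum : z 0 + z 1 = 1 := stdSimplex.add_eq_one ⟨z, hz⟩
  rw [sum_range_altLoss]
  nlinarith [hz.1 0, (Nat.cast_nonneg m : (0 : ℝ) ≤ m)]

theorem sum_range_altLoss_ge {m : ℕ} {x : ℕ → Fin 2 → ℝ}
    (hx : ∀ t, x t ∈ stdSimplex ℝ (Fin 2))
    (hlate : ∀ k, m ≤ k → k < 8 * m → x (2 * k + 1) 1 = 0) :
    -(8 * m : ℝ) ≤ ∑ t ∈ range (16 * m), altLoss (16 * m) t (x t) := by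
  have hpairs := sum_range_two_mul (fun t ↦ altLoss (16 * m) t (x t)) (8 * m)
  rw [show 2 * (8 * m) = 16 * m by ring] at hpairs
  rw [hpairs]
  calc -(8 * m : ℝ) = ∑ _k ∈ range (8 * m), (-1 : ℝ) := by simp
    _ ≤ _ := sum_le_sum fun k hk ↦ by
      rw [altLoss_add_altLoss]
      split_ifs with hkm
      · linarith [(mem_Icc_of_mem_stdSimplex (hx (2 * k)) 0).2]
      · rw [hlate k (not_lt.1 hkm) (mem_range.1 hk)]
        linarith [(mem_Icc_of_mem_stdSimplex (hx (2 * k)) 0).2]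

theorem iterate_eq_one_of_two_mul_le {m : ℕ} {ηe ηn : ℝ} {x : ℕ → Fin 2 → ℝ}
    (hx : ∀ t, x t ∈ stdSimplex ℝ (Fin 2)) (hx0 : x 0 0 = 1 / 2) (hηe : 1 ≤ m * ηe)
    (hodd : ∀ t, t % 2 = 0 → x (t + 1) 0 = min (x t 0 + ηe / 2) 1)
    (heven0 : ∀ t, t % 2 = 1 → t + 1 ≤ 2 * m → x (t + 1) = x t)
    (heven2 : ∀ t, t % 2 = 1 → 2 * m < t + 1 →
      x (t + 1) 0 = x t 0 / (x t 0 + x t 1 * exp (2 * ηn))) :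
    ∀ t, 2 * m ≤ t → x t 0 = 1 := by
  have hηe0 : 0 ≤ ηe := by nlinarith [(Nat.cast_nonneg m : (0 : ℝ) ≤ m)]
  have hramp := clipped_progression (u := fun k ↦ x (2 * k) 0) (c := ηe / 2) (n := m)
    (by positivity) (mem_Icc_of_mem_stdSimplex (hx _) 0).2
    (fun k hk ↦ by
      rw [show 2 * (k + 1) = 2 * k + 1 + 1 by ring, heven0 _ (by omega) (by omega),
        hodd _ (by omega)])
    m le_rfl
  intro t ht
  induction t, ht using Nat.le_induction with
  | base =>
    rw [hramp, min_eq_right]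
    simp only [mul_zero, hx0]
    linarith
  | succ t ht ih =>
    rcases Nat.mod_two_eq_zero_or_one t with h | h
    · rw [hodd t h, ih]
      exact min_eq_right (by linarith)
    · have hsum : x t 0 + x t 1 = 1 := stdSimplex.add_eq_one ⟨x t, hx t⟩
      have hx1 : x t 1 = 0 := by linarith
      rw [heven2 t h (by omega), ih, hx1]
      simp

theorem alternating_large_step_linear_regret_general (T : ℕ) (h16 : 16 ∣ T)
    (ηe ηn : ℝ) (hηe : 16 / (T : ℝ) ≤ ηe)
    (x : ℕ → Fin 2 → ℝ) (hx0 : x 0 = fun _ => (1 : ℝ) / 2)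
    (hxK : ∀ t, x t ∈ stdSimplex ℝ (Fin 2))
    -- odd rounds (`0`-indexed even `t`): Euclidean step with gradient `(−1, 0)`,
    -- projected back onto the simplex
    (hodd : ∀ t, t % 2 = 0 →
      x (t + 1) 0 = min (x t 0 + ηe / 2) 1 ∧ x (t + 1) 1 = 1 - x (t + 1) 0)
    -- early even rounds: zero loss, entropic step leaves the iterate unchanged
    (heven0 : ∀ t, t % 2 = 1 → t + 1 ≤ T / 8 → x (t + 1) = x t)
    -- late even rounds: entropic step with gradient `(0, −2)`
    (heven2 : ∀ t, t % 2 = 1 → T / 8 < t + 1 →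
      x (t + 1) 1 = x t 1 * Real.exp (2 * ηn) / (x t 0 + x t 1 * Real.exp (2 * ηn)) ∧
      x (t + 1) 0 = x t 0 / (x t 0 + x t 1 * Real.exp (2 * ηn))) :
    (∑ t ∈ Finset.range T, altLoss T t (x t))
        - sInf {v : ℝ | ∃ z ∈ stdSimplex ℝ (Fin 2),
            v = ∑ t ∈ Finset.range T, altLoss T t z}
      ≥ (T : ℝ) / 4 := by
  obtain ⟨m, rfl⟩ := h16
  have hT8 : 16 * m / 8 = 2 * m := by omega
  simp only [hT8] at heven0 heven2
  have hlate : ∀ k, m ≤ k → k < 8 * m → x (2 * k + 1) 1 = 0 := by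
    intro k hmk hk
    have hm : (0 : ℝ) < m := by exact_mod_cast (by omega : 0 < m)
    have hstep : 1 ≤ m * ηe := by
      rw [Nat.cast_mul, Nat.cast_ofNat, div_mul_cancel_left₀ (by norm_num),
        inv_le_iff_one_le_mul₀ hm] at hηe
      linarith
    have hone := iterate_eq_one_of_two_mul_le hxK (by simp [hx0]) hstep (fun t ht ↦ (hodd t ht).1)
      heven0 (fun t ht h ↦ (heven2 t ht h).2) (2 * k + 1) (by omega)
    have hsum : x (2 * k + 1) 0 + x (2 * k + 1) 1 = 1 := stdSimplex.add_eq_one ⟨_, hxK _⟩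
    linarith
  have halg := sum_range_altLoss_ge hxK hlate
  rw [(isLeast_sum_range_altLoss m).csInf_eq, ge_iff_le]
  push_cast
  linarith [(Nat.cast_nonneg m : (0 : ℝ) ≤ m)]

/-- Over `Δ₂`, started at `(1/2, 1/2)`, alternating Euclidean steps (step size
`η_euc ≥ 16/T`) on odd rounds with entropic steps (step size `η_ent`) on even rounds
incurs regret at least `T/4` under the losses `altLoss`. -/
theorem alternating_large_step_linear_regret (T : ℕ) (hT : 0 < T) (h16 : 16 ∣ T)
    (ηe ηn : ℝ) (hηe : 16 / (T : ℝ) ≤ ηe) (hηn : 0 ≤ ηn)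
    (x : ℕ → Fin 2 → ℝ) (hx0 : x 0 = fun _ => (1 : ℝ) / 2)
    (hxK : ∀ t, x t ∈ stdSimplex ℝ (Fin 2))
    -- odd rounds (`0`-indexed even `t`): Euclidean step with gradient `(−1, 0)`,
    -- projected back onto the simplex
    (hodd : ∀ t, t % 2 = 0 →
      x (t + 1) 0 = min (x t 0 + ηe / 2) 1 ∧ x (t + 1) 1 = 1 - x (t + 1) 0)
    -- early even rounds: zero loss, entropic step leaves the iterate unchanged
    (heven0 : ∀ t, t % 2 = 1 → t + 1 ≤ T / 8 → x (t + 1) = x t)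
    -- late even rounds: entropic step with gradient `(0, −2)`
    (heven2 : ∀ t, t % 2 = 1 → T / 8 < t + 1 →
      x (t + 1) 1 = x t 1 * Real.exp (2 * ηn) / (x t 0 + x t 1 * Real.exp (2 * ηn)) ∧
      x (t + 1) 0 = x t 0 / (x t 0 + x t 1 * Real.exp (2 * ηn))) :
    (∑ t ∈ Finset.range T, altLoss T t (x t))
        - sInf {v : ℝ | ∃ z ∈ stdSimplex ℝ (Fin 2),
            v = ∑ t ∈ Finset.range T, altLoss T t z}
      ≥ (T : ℝ) / 4 :=
  alternating_large_step_linear_regret_general T h16 ηe ηn hηe x hx0 hxK hodd heven0 heven2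
end

section
/- Multiplicative weights over N experts (mirror maps): if at each round the algorithm plays x^{(t)} = Σ_ℓ p_ℓ^{(t)} X_ℓ^{(t)}, updates weights w_ℓ^{(t+1)} = w_ℓ^{(t)} exp(−ε f^{(t)}(X_ℓ^{(t)})/ρ) (normalized), losses are convex with max_{x,z∈K} f^{(t)}(x) − f^{(t)}(z) ≤ ρ, and T ≥ ln N with ε = √(ln N / T), then regret(T) ≤ min_ℓ regret_ℓ(T) + 2ρ√(T ln N). -/
/-!
The weights are those of Hedge with learning rate `η = ε / ρ` on the expert losses
`m_ℓ t = f t (X ℓ t)`, and by Jensen the played loss is at most the `p`-average `⟨p_t, m_t⟩`.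
Since all losses of a round lie within `ρ` of each other, centring them at one of them lets
`exp u ≤ 1 + u + u²` and `1 + u ≤ exp u` show that the potential `Φ_t = Σ_ℓ w_ℓ t` shrinks by at
least the factor `exp (-η ⟨p_t, m_t⟩ + η² ρ²)` per round. As `Φ_T` dominates every single weight
`w_ℓ T = exp (-η Σ_t m_ℓ t) / N`, comparing logarithms bounds the regret by
`ρ (ln N / ε + ε T) = 2 ρ √(T ln N)`.
-/

open Finset Real

theorem exp_le_one_add_add_sq {x : ℝ} (hx : |x| ≤ 1) : exp x ≤ 1 + x + x ^ 2 := by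
  linarith [(abs_le.1 (abs_exp_sub_one_sub_id_le hx)).2]

theorem sum_mul_exp_neg_mul_le {ι : Type*} [Fintype ι] {w m : ι → ℝ} {c η ρ : ℝ}
    (hw : ∀ i, 0 ≤ w i) (hW : 0 < ∑ i, w i) (hm : ∀ i, |m i - c| ≤ ρ) (hη : 0 ≤ η)
    (hηρ : η * ρ ≤ 1) :
    ∑ i, w i * exp (-(η * m i))
      ≤ (∑ i, w i) * exp (-(η * ∑ i, (w i / ∑ j, w j) * m i) + η ^ 2 * ρ ^ 2) := by
  set W := ∑ i, w i
  set μ := ∑ i, (w i / W) * m i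
  have hexp : ∀ i,
      exp (-(η * m i)) ≤ exp (-(η * c)) * (1 - η * (m i - c) + η ^ 2 * ρ ^ 2) := by
    intro i
    have hu : |-(η * (m i - c))| ≤ η * ρ := by
      rw [abs_neg, abs_mul, abs_of_nonneg hη]; exact mul_le_mul_of_nonneg_left (hm i) hη
    have hsq : (η * (m i - c)) ^ 2 ≤ η ^ 2 * ρ ^ 2 := by
      rw [← mul_pow, ← sq_abs, ← abs_neg]; gcongr
    calc exp (-(η * m i)) = exp (-(η * c)) * exp (-(η * (m i - c))) := by
          rw [← exp_add]; ring_nf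
      _ ≤ exp (-(η * c)) * (1 - η * (m i - c) + η ^ 2 * ρ ^ 2) := by
          gcongr
          linarith [exp_le_one_add_add_sq (hu.trans hηρ), neg_sq (η * (m i - c))]
  have hμ : ∑ i, w i * m i = W * μ := by
    rw [mul_sum]; refine sum_congr rfl fun i _ => ?_; field_simp
  calc ∑ i, w i * exp (-(η * m i))
      ≤ ∑ i, w i * (exp (-(η * c)) * (1 - η * (m i - c) + η ^ 2 * ρ ^ 2)) :=
        sum_le_sum fun i _ => mul_le_mul_of_nonneg_left (hexp i) (hw i)
    _ = exp (-(η * c)) * W * (-(η * (μ - c)) + η ^ 2 * ρ ^ 2 + 1) := by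
        have : ∀ i, w i * (exp (-(η * c)) * (1 - η * (m i - c) + η ^ 2 * ρ ^ 2))
            = exp (-(η * c)) * (1 + η * c + η ^ 2 * ρ ^ 2) * w i
              - exp (-(η * c)) * η * (w i * m i) := fun i => by ring
        simp only [this, sum_sub_distrib, ← mul_sum, hμ]
        ring
    _ ≤ exp (-(η * c)) * W * exp (-(η * (μ - c)) + η ^ 2 * ρ ^ 2) := by
        gcongr; exact add_one_le_exp _
    _ = W * exp (-(η * μ) + η ^ 2 * ρ ^ 2) := by
        rw [mul_comm (exp _) W, mul_assoc, ← exp_add]; ring_nf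

section Hedge

variable {ι : Type*} {w m : ι → ℕ → ℝ} {η : ℝ}

theorem hedge_weight_eq (hstep : ∀ i t, w i (t + 1) = w i t * exp (-(η * m i t)))
    (i : ι) (t : ℕ) :
    w i t = w i 0 * exp (-(η * ∑ s ∈ range t, m i s)) := by
  induction t with
  | zero => simp
  | succ t ih => rw [hstep, ih, sum_range_succ, mul_assoc, ← exp_add]; ring_nf

theorem hedge_weight_pos (hstep : ∀ i t, w i (t + 1) = w i t * exp (-(η * m i t)))
    (hw0 : ∀ i, 0 < w i 0) (i : ι) (t : ℕ) : 0 < w i t := by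
  rw [hedge_weight_eq hstep]; exact mul_pos (hw0 i) (exp_pos _)

variable [Fintype ι]

theorem hedge_potential_le [Nonempty ι] {c : ℕ → ℝ} {ρ : ℝ}
    (hstep : ∀ i t, w i (t + 1) = w i t * exp (-(η * m i t))) (hw0 : ∀ i, 0 < w i 0)
    (hm : ∀ i t, |m i t - c t| ≤ ρ) (hη : 0 ≤ η) (hηρ : η * ρ ≤ 1) (T : ℕ) :
    ∑ i, w i T ≤ (∑ i, w i 0) *
      exp (-(η * ∑ t ∈ range T, ∑ i, (w i t / ∑ j, w j t) * m i t) + T * (η ^ 2 * ρ ^ 2)) := by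
  induction T with
  | zero => simp
  | succ T ih =>
    have hpos := hedge_weight_pos hstep hw0
    calc ∑ i, w i (T + 1) = ∑ i, w i T * exp (-(η * m i T)) := by simp only [hstep]
      _ ≤ (∑ i, w i T) * exp (-(η * ∑ i, (w i T / ∑ j, w j T) * m i T) + η ^ 2 * ρ ^ 2) :=
        sum_mul_exp_neg_mul_le (fun i => (hpos i T).le)
          (sum_pos (fun i _ => hpos i T) univ_nonempty) (fun i => hm i T) hη hηρ
      _ ≤ _ := by
        grw [ih]
        rw [mul_assoc, ← exp_add, sum_range_succ]
        apply le_of_eq; congr 2; push_cast; ring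

theorem hedge_regret_le [Nonempty ι] {c : ℕ → ℝ} {ρ : ℝ}
    (hstep : ∀ i t, w i (t + 1) = w i t * exp (-(η * m i t)))
    (hw0 : ∀ i, w i 0 = 1 / Fintype.card ι)
    (hm : ∀ i t, |m i t - c t| ≤ ρ) (hη : 0 < η) (hηρ : η * ρ ≤ 1) (T : ℕ) (ℓ : ι) :
    ∑ t ∈ range T, ∑ i, (w i t / ∑ j, w j t) * m i t
      ≤ ∑ t ∈ range T, m ℓ t + log (Fintype.card ι) / η + η * T * ρ ^ 2 := by
  have hN : (0 : ℝ) < Fintype.card ι := by exact_mod_cast Fintype.card_pos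
  have hw0' : ∀ i, 0 < w i 0 := fun i => by rw [hw0]; positivity
  have hpot := hedge_potential_le hstep hw0' hm hη.le hηρ T
  have hW0 : ∑ i, w i 0 = 1 := by simp [hw0, hN.ne']
  have hℓ : w ℓ T ≤ ∑ i, w i T :=
    single_le_sum (fun i _ => (hedge_weight_pos hstep hw0' i T).le) (mem_univ ℓ)
  rw [hedge_weight_eq hstep, hw0, one_div, ← exp_log hN, ← exp_neg, ← exp_add] at hℓ
  rw [hW0, one_mul] at hpot
  have hlog := exp_le_exp.1 (hℓ.trans hpot)
  have hsplit : log (Fintype.card ι) / η + η * T * ρ ^ 2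
      = (log (Fintype.card ι) + T * (η ^ 2 * ρ ^ 2)) / η := by
    field_simp
  rw [add_assoc, hsplit, ← sub_le_iff_le_add', le_div_iff₀ hη]
  linarith

end Hedge

theorem ConvexOn.map_sum_div_sum_smul_le {ι E : Type*} [Fintype ι] [AddCommGroup E] [Module ℝ E]
    {K : Set E} {f : E → ℝ} (hf : ConvexOn ℝ K f) {w : ι → ℝ} {X : ι → E}
    (hw : ∀ i, 0 ≤ w i) (hW : 0 < ∑ i, w i) (hX : ∀ i, X i ∈ K) :
    f (∑ i, (w i / ∑ j, w j) • X i) ≤ ∑ i, (w i / ∑ j, w j) * f (X i) :=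
  hf.map_sum_le (fun i _ => div_nonneg (hw i) hW.le) (by rw [← sum_div, div_self hW.ne'])
    (fun i _ => hX i)

theorem sum_div_sum_mul_eq_of_subsingleton {ι : Type*} [Fintype ι] [Subsingleton ι]
    {w m : ι → ℝ} {i : ι} (hw : w i ≠ 0) : ∑ k, (w k / ∑ j, w j) * m k = m i := by
  simp only [Fintype.sum_subsingleton _ i, div_self hw, one_mul]

theorem div_sqrt_div_add_sqrt_div_mul {a T : ℝ} (ha : 0 < a) (hT : 0 < T) :
    a / √(a / T) + √(a / T) * T = 2 * √(T * a) := by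
  obtain ⟨s, hs, rfl⟩ : ∃ s, 0 < s ∧ a = s ^ 2 := ⟨√a, sqrt_pos.2 ha, (sq_sqrt ha.le).symm⟩
  obtain ⟨r, hr, rfl⟩ : ∃ r, 0 < r ∧ T = r ^ 2 := ⟨√T, sqrt_pos.2 hT, (sq_sqrt hT.le).symm⟩
  rw [← div_pow, sqrt_sq (by positivity), ← mul_pow, sqrt_sq (by positivity)]
  field_simp
  ring

theorem mirrorWeights_regret_general {d N T : ℕ} (hN : 0 < N)
    (K : Set (Fin d → ℝ))
    (f : ℕ → (Fin d → ℝ) → ℝ) (hconv : ∀ t, ConvexOn ℝ K (f t))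
    (ρ : ℝ) (hρ : 0 < ρ)
    (hbound : ∀ t, ∀ x ∈ K, ∀ z ∈ K, f t x - f t z ≤ ρ)
    (hTN : Real.log N ≤ (T : ℝ))
    (ε : ℝ) (hε : ε = Real.sqrt (Real.log N / T))
    (X : Fin N → ℕ → Fin d → ℝ) (hXK : ∀ ℓ t, X ℓ t ∈ K)
    (w : Fin N → ℕ → ℝ) (hw0 : ∀ ℓ, w ℓ 0 = 1 / N)
    (hwstep : ∀ ℓ t, w ℓ (t + 1) = w ℓ t * Real.exp (-(ε * f t (X ℓ t)) / ρ))
    (xp : ℕ → Fin d → ℝ)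
    (hxp : ∀ t, xp t = ∑ ℓ, (w ℓ t / ∑ k, w k t) • X ℓ t) :
    ∑ t ∈ Finset.range T, f t (xp t)
      ≤ (Finset.univ.inf' (Finset.univ_nonempty_iff.mpr ⟨⟨0, hN⟩⟩)
            (fun ℓ => ∑ t ∈ Finset.range T, f t (X ℓ t)))
          + 2 * ρ * Real.sqrt ((T : ℝ) * Real.log N) := by
  have : Nonempty (Fin N) := ⟨⟨0, hN⟩⟩
  obtain ⟨ℓ, -, hℓ⟩ :=
    exists_mem_eq_inf' univ_nonempty (fun ℓ => ∑ t ∈ range T, f t (X ℓ t))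
  rw [hℓ]
  have hstep : ∀ i t, w i (t + 1) = w i t * exp (-(ε / ρ * f t (X i t))) := fun i t => by
    rw [hwstep, div_mul_eq_mul_div, neg_div]
  have hpos := hedge_weight_pos hstep (fun i => by rw [hw0]; positivity)
  have hjensen : ∑ t ∈ range T, f t (xp t)
      ≤ ∑ t ∈ range T, ∑ i, (w i t / ∑ j, w j t) * f t (X i t) :=
    sum_le_sum fun t _ => hxp t ▸ (hconv t).map_sum_div_sum_smul_le (fun i => (hpos i t).le)
      (sum_pos (fun i _ => hpos i t) univ_nonempty) (hXK · t)
  refine hjensen.trans ?_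
  rcases (Nat.one_le_iff_ne_zero.2 hN.ne').eq_or_lt with rfl | hN1
  · have hone : ∀ t, ∑ i, (w i t / ∑ j, w j t) * f t (X i t) = f t (X ℓ t) := fun t =>
      sum_div_sum_mul_eq_of_subsingleton (hpos ℓ t).ne'
    rw [sum_congr rfl fun t _ => hone t]
    simp
  · have hlog : 0 < log N := log_pos (by exact_mod_cast hN1)
    have hT : (0 : ℝ) < T := hlog.trans_le hTN
    have hε0 : 0 < ε := hε ▸ sqrt_pos.2 (div_pos hlog hT)
    have hε1 : ε ≤ 1 := hε ▸ sqrt_le_one.2 ((div_le_one hT).2 hTN)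
    have hm : ∀ i t, |f t (X i t) - f t (X ℓ t)| ≤ ρ := fun i t =>
      abs_sub_le_iff.2 ⟨hbound t _ (hXK i t) _ (hXK ℓ t), hbound t _ (hXK ℓ t) _ (hXK i t)⟩
    calc _ ≤ _ := hedge_regret_le hstep (by simpa using hw0) hm (div_pos hε0 hρ)
          (by rwa [div_mul_cancel₀ _ hρ.ne']) T ℓ
      _ = _ := by
        rw [Fintype.card_fin, add_assoc, mul_right_comm 2 ρ,
          ← div_sqrt_div_add_sqrt_div_mul hlog hT, ← hε]
        field_simp

/-- Multiplicative weights over `N` experts (mirror maps): if the algorithm plays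
`x^{(t)} = Σ_ℓ p_ℓ^{(t)} X_ℓ^{(t)}` with weights
`w_ℓ^{(t+1)} = w_ℓ^{(t)} e^{−ε f^{(t)}(X_ℓ^{(t)})/ρ}` (normalized probabilities
`p_ℓ^{(t)} = w_ℓ^{(t)} / Σ_k w_k^{(t)}`), the losses are convex with
`f^{(t)}(x) − f^{(t)}(z) ≤ ρ` on `K`, `T ≥ ln N` and `ε = √(ln N / T)`, then
`regret(T) ≤ min_ℓ regret_ℓ(T) + 2ρ√(T ln N)`; since the benchmark `min_{x∈K} Σ_t f^{(t)}(x)`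
is common to both regrets, this is equivalent to the played-loss total being at most the
best expert's total loss plus `2ρ√(T ln N)`. -/
theorem mirrorWeights_regret {d N T : ℕ} (hN : 0 < N) (hT : 0 < T)
    (K : Set (Fin d → ℝ)) (hK : Convex ℝ K)
    (f : ℕ → (Fin d → ℝ) → ℝ) (hconv : ∀ t, ConvexOn ℝ K (f t))
    (ρ : ℝ) (hρ : 0 < ρ)
    (hbound : ∀ t, ∀ x ∈ K, ∀ z ∈ K, f t x - f t z ≤ ρ)
    (hTN : Real.log N ≤ (T : ℝ))
    (ε : ℝ) (hε : ε = Real.sqrt (Real.log N / T))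
    (X : Fin N → ℕ → Fin d → ℝ) (hXK : ∀ ℓ t, X ℓ t ∈ K)
    (w : Fin N → ℕ → ℝ) (hw0 : ∀ ℓ, w ℓ 0 = 1 / N)
    (hwstep : ∀ ℓ t, w ℓ (t + 1) = w ℓ t * Real.exp (-(ε * f t (X ℓ t)) / ρ))
    (xp : ℕ → Fin d → ℝ)
    (hxp : ∀ t, xp t = ∑ ℓ, (w ℓ t / ∑ k, w k t) • X ℓ t) :
    ∑ t ∈ Finset.range T, f t (xp t)
      ≤ (Finset.univ.inf' (Finset.univ_nonempty_iff.mpr ⟨⟨0, hN⟩⟩)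
            (fun ℓ => ∑ t ∈ Finset.range T, f t (X ℓ t)))
          + 2 * ρ * Real.sqrt ((T : ℝ) * Real.log N) :=
  mirrorWeights_regret_general hN K f hconv ρ hρ hbound hTN ε hε X hXK w hw0 hwstep xp hxp
end

section
/- Let P̂ = conv((1/R)e_1, ..., (1/R)e_d, (1/d)·1_d) with 2 ≤ R ≤ d, and z⁽¹⁾ = (1/d)·1_d. Then every z ∈ P̂ satisfies z_1 − 1/d ≤ γ ‖z − z⁽¹⁾‖_1, where γ = (1/R − 1/d)/(1 + 1/R − 2/d) ≤ 1/R. -/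
open Finset Real

/-- The polytope `P̂ = conv((1/R)e₁, …, (1/R)e_d, (1/d)·1_d)`. -/
def scaledPolytope (d : ℕ) (R : ℝ) : Set (Fin d → ℝ) :=
  convexHull ℝ
    ({v : Fin d → ℝ | ∃ i : Fin d, v = fun j => if j = i then 1 / R else 0}
      ∪ {fun _ => 1 / (d : ℝ)})

/-!
With `r = 1/R` and `e = 1/d`, the linear inequality `(r - e) ∑ⱼ wⱼ + (1 - r) w₁ ≤ r (1 - e)` holds at
every vertex of `P̂`, hence on `P̂`; it is tight at `r e₁` and at the center. In terms of `x = z - z⁽¹⁾`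
it reads `(r - e) ∑ⱼ xⱼ + (1 - r) x₁ ≤ 0`, and combined with `‖x‖₁ ≥ 2 x₁ - ∑ⱼ xⱼ` it gives
`x₁ ≤ γ ‖x‖₁`.
-/

lemma two_mul_sub_sum_le_sum_abs {ι : Type*} [Fintype ι] (x : ι → ℝ) (i : ι) :
    2 * x i - ∑ j, x j ≤ ∑ j, |x j| := by
  have h := single_le_sum (f := fun j => |x j| + x j)
    (fun j _ => by linarith [neg_abs_le (x j)]) (mem_univ i)
  rw [sum_add_distrib] at h
  linarith [le_abs_self (x i)]

lemma scaledPolytope_subset_halfSpace {d : ℕ} {R : ℝ} (hR : 1 ≤ R) (i₀ : Fin d) :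
    scaledPolytope d R ⊆
      {w | (1 / R - 1 / d) * ∑ j, w j + (1 - 1 / R) * w i₀ ≤ 1 / R * (1 - 1 / d)} := by
  have hd : (d : ℝ) ≠ 0 := by have := i₀.pos; positivity
  have hr₀ : 0 ≤ 1 / R := by positivity
  have hr₁ : 1 / R ≤ 1 := (div_le_one (by linarith)).2 hR
  refine convexHull_min ?_ (convex_halfSpace_le ⟨fun x y => ?_, fun c x => ?_⟩ _)
  · rintro w (⟨i, rfl⟩ | rfl)
    · simp only [Set.mem_ofPred_eq, sum_ite_eq', mem_univ, if_true]
      split_ifs <;> nlinarith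
    · simp only [Set.mem_ofPred_eq, sum_const, card_univ, Fintype.card_fin, nsmul_eq_mul]
      field_simp
      linarith
  · simp only [Pi.add_apply, sum_add_distrib]
    ring
  · simp only [Pi.smul_apply, smul_eq_mul, ← mul_sum]
    ring

/-- For `P̂ = conv((1/R)e₁,…,(1/R)e_d,(1/d)1_d)` with `2 ≤ R ≤ d` and center
`z⁽¹⁾ = (1/d)1_d`, every `z ∈ P̂` satisfies `z₁ − 1/d ≤ γ ‖z − z⁽¹⁾‖₁` where
`γ = (1/R − 1/d)/(1 + 1/R − 2/d) ≤ 1/R`. -/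
theorem scaledPolytope_first_coord_growth {d : ℕ} (hd : 0 < d)
    (R : ℝ) (hR : 2 ≤ R) (hRd : R ≤ (d : ℝ))
    (z : Fin d → ℝ) (hz : z ∈ scaledPolytope d R) :
    z ⟨0, hd⟩ - 1 / (d : ℝ)
        ≤ ((1 / R - 1 / d) / (1 + 1 / R - 2 / d)) * ∑ i, |z i - 1 / (d : ℝ)| ∧
      (1 / R - 1 / (d : ℝ)) / (1 + 1 / R - 2 / d) ≤ 1 / R := by
  have hplane := scaledPolytope_subset_halfSpace (by linarith) ⟨0, hd⟩ hz
  rw [Set.mem_ofPred_eq] at hplane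
  have hL1 := two_mul_sub_sum_le_sum_abs (fun i => z i - 1 / (d : ℝ)) ⟨0, hd⟩
  have hsum : ∑ i, (z i - 1 / (d : ℝ)) = ∑ i, z i - 1 := by
    simp only [sum_sub_distrib, sum_const, card_univ, Fintype.card_fin, nsmul_eq_mul]
    field_simp
  rw [hsum] at hL1
  rw [← mul_one_div 2]
  set r := 1 / R
  set e := 1 / (d : ℝ)
  have he : 0 < e := by positivity
  have her : e ≤ r := one_div_le_one_div_of_le (by linarith) hRd
  have hr : r ≤ 1 / 2 := one_div_le_one_div_of_le two_pos hR
  have hden : 0 < 1 + r - 2 * e := by linarith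
  constructor
  · rw [div_mul_eq_mul_div, le_div_iff₀ hden]
    nlinarith
  · rw [div_le_iff₀ hden]
    nlinarith [mul_nonneg he.le (by linarith : (0 : ℝ) ≤ 1 - 2 * r)]
end
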